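/- Let R_opt be the unique real number R > 1 with (log R)^2 = 1/R, let f(R) = −1/R + 1/(R^2·(log R)^2), and let R_0 > R_opt. Then there exists a function R : ℝ → ℝ with R(0) = R_0 such that for every t ≥ 0 the function R is differentiable at t with derivative f(R(t)); moreover R is strictly decreasing on [0, ∞), satisfies R_opt < R(t) ≤ R_0 for all t ≥ 0, and R(t) converges to R_opt as t → ∞. -/

import Mathlib

/-!
Separation of variables. On `(R_opt, ∞)` the speed `f` is negative, so the time
`T(r) = ∫_{R₀}^r ds / f(s)` the flow needs to get from `R₀` to `r` is strictly decreasing with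
`T' = 1 / f`, and its inverse solves `R' = f(R)`. The solution is global because `T` maps
`(R_opt, ∞)` onto `ℝ`: far out `|f| ≤ 1`, so `T(r) ≤ -(r - R₀)`; near `R_opt` the speed vanishes
linearly, `|f(r)| ≤ r log² r - 1 = O(r - R_opt)` since `R_opt log² R_opt = 1`, so `T(r)` grows
like `log (1 / (r - R_opt))`. For the same reason the solution never reaches `R_opt` and tends
to it as `t → ∞`.
-/

open Real Set Filter Topology Asymptotics intervalIntegral
open MeasureTheory (volume)

noncomputable def flowTime (f : ℝ → ℝ) (x₀ r : ℝ) : ℝ := ∫ s in x₀..r, (f s)⁻¹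

section flowTime

variable {f : ℝ → ℝ} {a x₀ : ℝ}

lemma intervalIntegrable_inv_of_neg (hcont : ContinuousOn f (Ioi a))
    (hneg : ∀ x ∈ Ioi a, f x < 0) {u v : ℝ} (hu : a < u) (hv : a < v) :
    IntervalIntegrable (fun s => (f s)⁻¹) volume u v :=
  ((hcont.inv₀ fun x hx => (hneg x hx).ne).mono fun _ hs =>
    (lt_inf_iff.2 ⟨hu, hv⟩).trans_le hs.1).intervalIntegrable

lemma hasDerivAt_flowTime (hcont : ContinuousOn f (Ioi a)) (hneg : ∀ x ∈ Ioi a, f x < 0)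
    (hx₀ : a < x₀) {r : ℝ} (hr : a < r) : HasDerivAt (flowTime f x₀) (f r)⁻¹ r :=
  integral_hasDerivAt_right (intervalIntegrable_inv_of_neg hcont hneg hx₀ hr)
    ((hcont.inv₀ fun x hx => (hneg x hx).ne).stronglyMeasurableAtFilter isOpen_Ioi r hr)
    ((hcont.continuousAt (Ioi_mem_nhds hr)).inv₀ (hneg r hr).ne)

lemma continuousOn_flowTime (hcont : ContinuousOn f (Ioi a)) (hneg : ∀ x ∈ Ioi a, f x < 0)
    (hx₀ : a < x₀) : ContinuousOn (flowTime f x₀) (Ioi a) :=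
  fun _ hr => (hasDerivAt_flowTime hcont hneg hx₀ hr).continuousAt.continuousWithinAt

lemma strictAntiOn_flowTime (hcont : ContinuousOn f (Ioi a)) (hneg : ∀ x ∈ Ioi a, f x < 0)
    (hx₀ : a < x₀) : StrictAntiOn (flowTime f x₀) (Ioi a) := by
  refine strictAntiOn_of_hasDerivWithinAt_neg (f' := fun r => (f r)⁻¹) (convex_Ioi a)
    (continuousOn_flowTime hcont hneg hx₀)
    (fun r hr => ?_) fun r hr => ?_
  · rw [interior_Ioi] at hr ⊢
    exact (hasDerivAt_flowTime hcont hneg hx₀ hr).hasDerivWithinAt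
  · rw [interior_Ioi] at hr
    exact inv_lt_zero.2 (hneg r hr)

lemma surjOn_flowTime (hcont : ContinuousOn f (Ioi a)) (hneg : ∀ x ∈ Ioi a, f x < 0)
    (hx₀ : a < x₀) (h_near : Tendsto (flowTime f x₀) (𝓝[>] a) atTop)
    (h_far : Tendsto (flowTime f x₀) atTop atBot) : SurjOn (flowTime f x₀) (Ioi a) univ := by
  intro y _
  obtain ⟨r₁, hr₁y, hr₁⟩ := ((h_near.eventually (eventually_ge_atTop y)).and
    self_mem_nhdsWithin).exists
  obtain ⟨r₂, hr₂y, hr₁₂⟩ := ((h_far.eventually (eventually_le_atBot y)).and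
    (eventually_ge_atTop r₁)).exists
  obtain ⟨r, hr, hry⟩ := intermediate_value_Icc' hr₁₂
    ((continuousOn_flowTime hcont hneg hx₀).mono fun _ hs => lt_of_lt_of_le hr₁ hs.1) ⟨hr₂y, hr₁y⟩
  exact ⟨r, lt_of_lt_of_le hr₁ hr.1, hry⟩

lemma tendsto_flowTime_atTop_atBot (hcont : ContinuousOn f (Ioi a))
    (hneg : ∀ x ∈ Ioi a, f x < 0) (hx₀ : a < x₀) {C : ℝ} (hC : ∀ x ∈ Ioi a, -C ≤ f x) :
    Tendsto (flowTime f x₀) atTop atBot := by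
  have hCpos : 0 < C := by linarith [hC x₀ hx₀, hneg x₀ hx₀]
  have hlin : Tendsto (fun r => -C⁻¹ * (r - x₀)) atTop atBot :=
    (tendsto_atTop_add_const_right _ _ tendsto_id).const_mul_atTop_of_neg (by simpa using hCpos)
  refine tendsto_atBot_mono' _ ?_ hlin
  filter_upwards [eventually_ge_atTop x₀] with r hr
  have hr' : a < r := hx₀.trans_le hr
  calc flowTime f x₀ r ≤ ∫ _ in x₀..r, -C⁻¹ :=
        integral_mono_on hr (intervalIntegrable_inv_of_neg hcont hneg hx₀ hr')
          intervalIntegrable_const fun s hs => by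
            have hs' : a < s := hx₀.trans_le hs.1
            simpa using (inv_le_inv_of_neg (hneg s hs') (by linarith)).2 (hC s hs')
    _ = -C⁻¹ * (r - x₀) := by rw [intervalIntegral.integral_const, smul_eq_mul, mul_comm]

lemma tendsto_flowTime_nhdsGT_atTop (hcont : ContinuousOn f (Ioi a))
    (hneg : ∀ x ∈ Ioi a, f x < 0) (hx₀ : a < x₀) (hlin : f =O[𝓝[>] a] (· - a)) :
    Tendsto (flowTime f x₀) (𝓝[>] a) atTop := by
  obtain ⟨C, hC, hCf⟩ := hlin.exists_pos
  obtain ⟨u, hu, hIoc⟩ := mem_nhdsGT_iff_exists_Ioc_subset.1 hCf.bound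
  set b := min u x₀
  have hb : a < b := lt_min hu hx₀
  have hbound : ∀ r ∈ Ioo a b,
      flowTime f x₀ b + C⁻¹ * log ((b - a) / (r - a)) ≤ flowTime f x₀ r := by
    rintro r ⟨har, hrb⟩
    have hsplit : flowTime f x₀ r = flowTime f x₀ b + ∫ s in r..b, -(f s)⁻¹ := by
      rw [flowTime, flowTime, ← integral_add_adjacent_intervals
          (intervalIntegrable_inv_of_neg hcont hneg hx₀ hb)
          (intervalIntegrable_inv_of_neg hcont hneg hb har),
        integral_symm b r, integral_neg, neg_neg]
    have hcmp : ∫ s in r..b, (C * (s - a))⁻¹ ≤ ∫ s in r..b, -(f s)⁻¹ := by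
      refine integral_mono_on hrb.le (ContinuousOn.intervalIntegrable fun s hs => ?_)
        (intervalIntegrable_inv_of_neg hcont hneg har hb).neg fun s hs => ?_
      · have has : a < s := har.trans_le (by simpa [hrb.le] using hs.1)
        exact (continuousAt_const.mul (continuousAt_id.sub continuousAt_const)).inv₀
          (mul_pos hC (sub_pos.2 has)).ne' |>.continuousWithinAt
      · have has : a < s := har.trans_le hs.1
        have hfs : ‖f s‖ ≤ C * ‖s - a‖ := hIoc ⟨has, hs.2.trans (min_le_left _ _)⟩
        rw [Real.norm_eq_abs, Real.norm_eq_abs, abs_of_neg (hneg s has),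
          abs_of_pos (sub_pos.2 has)] at hfs
        rw [← inv_neg]
        exact inv_anti₀ (neg_pos.2 (hneg s has)) hfs
    have hlog : ∫ s in r..b, (C * (s - a))⁻¹ = C⁻¹ * log ((b - a) / (r - a)) := by
      rw [← integral_inv_of_pos (sub_pos.2 har) (sub_pos.2 hb), ← integral_const_mul,
        ← integral_comp_sub_right fun x => C⁻¹ * x⁻¹]
      simp only [mul_inv]
    linarith
  have hsub : Tendsto (· - a) (𝓝[>] a) (𝓝[>] 0) :=
    tendsto_nhdsWithin_iff.2 ⟨((continuous_sub_right a).tendsto' a 0 (sub_self a)).mono_left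
      nhdsWithin_le_nhds, eventually_nhdsWithin_of_forall fun r hr => mem_Ioi.2 (sub_pos.2 hr)⟩
  have hlower : Tendsto (fun r => flowTime f x₀ b + C⁻¹ * log ((b - a) / (r - a)))
      (𝓝[>] a) atTop :=
    tendsto_atTop_add_const_left _ _ <| (tendsto_log_atTop.comp <|
      (tendsto_inv_nhdsGT_zero.comp hsub).const_mul_atTop (sub_pos.2 hb)).const_mul_atTop
      (inv_pos.2 hC)
  refine tendsto_atTop_mono' _ ?_ hlower
  filter_upwards [Ioo_mem_nhdsGT hb] using hbound

theorem exists_solution_of_tendsto_flowTime (hcont : ContinuousOn f (Ioi a))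
    (hneg : ∀ x ∈ Ioi a, f x < 0) (hx₀ : a < x₀)
    (h_near : Tendsto (flowTime f x₀) (𝓝[>] a) atTop)
    (h_far : Tendsto (flowTime f x₀) atTop atBot) :
    ∃ x : ℝ → ℝ, x 0 = x₀ ∧ (∀ t, HasDerivAt x (f (x t)) t) ∧ StrictAnti x ∧
      (∀ t, a < x t) ∧ Tendsto x atTop (𝓝 a) := by
  set T := flowTime f x₀
  have hT : StrictAntiOn T (Ioi a) := strictAntiOn_flowTime hcont hneg hx₀
  have hsurj : SurjOn T (Ioi a) univ := surjOn_flowTime hcont hneg hx₀ h_near h_far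
  set x := Function.invFunOn T (Ioi a)
  have hx_mem : ∀ t, a < x t := fun t => Function.invFunOn_mem (hsurj (mem_univ t))
  have hTx : ∀ t, T (x t) = t := fun t => Function.invFunOn_eq (hsurj (mem_univ t))
  have hxT : ∀ r, a < r → x (T r) = r := fun r hr => hT.injOn (hx_mem _) hr (hTx _)
  have hx_anti : StrictAnti x := fun s t hst => by
    rwa [← hT.lt_iff_gt (hx_mem s) (hx_mem t), hTx, hTx]
  have hx_range : range x = Ioi a :=
    (range_subset_iff.2 hx_mem).antisymm fun r hr => ⟨T r, hxT r hr⟩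
  have hx_cont : ∀ t, ContinuousAt x t := fun t =>
    (hx_anti.strictAntiOn univ).dual_right.continuousAt_of_image_mem_nhds univ_mem
      -- the neighbourhood filter of `ℝᵒᵈ` is that of `ℝ`
      (by rw [image_univ]; show range x ∈ 𝓝 (x t); exact hx_range ▸ Ioi_mem_nhds (hx_mem t))
  have hT₀ : T x₀ = 0 := integral_same
  refine ⟨x, hT₀ ▸ hxT x₀ hx₀, fun t => ?_, hx_anti, hx_mem, ?_⟩
  · simpa using (hasDerivAt_flowTime hcont hneg hx₀ (hx_mem t)).of_local_left_inverse (hx_cont t)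
      (inv_ne_zero (hneg _ (hx_mem t)).ne) (Eventually.of_forall hTx)
  · refine tendsto_order.2 ⟨fun b hb => Eventually.of_forall fun t => hb.trans (hx_mem t),
      fun b hb => ?_⟩
    filter_upwards [eventually_gt_atTop (T b)] with t ht
    rw [← hxT b hb]
    exact hx_anti ht

end flowTime

noncomputable def radialSpeed (r : ℝ) : ℝ := -1 / r + 1 / (r ^ 2 * log r ^ 2)

lemma strictMonoOn_mul_log_sq : StrictMonoOn (fun r : ℝ => r * log r ^ 2) (Ici 1) := by
  intro r (hr : 1 ≤ r) s _ hrs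
  have hlog_s : 0 < log s := log_pos (hr.trans_lt hrs)
  calc r * log r ^ 2 ≤ r * log s ^ 2 := by gcongr; exact log_nonneg hr
    _ < s * log s ^ 2 := by gcongr

lemma neg_radialSpeed_eq {r : ℝ} (hr : 1 < r) :
    -radialSpeed r = (r * log r ^ 2 - 1) / (r * (r * log r ^ 2)) := by
  have hlog : log r ≠ 0 := (log_pos hr).ne'
  have hr0 : r ≠ 0 := by positivity
  rw [radialSpeed]
  field_simp
  ring

lemma one_lt_mul_log_sq {Ropt r : ℝ} (hRopt : 1 < Ropt) (hroot : log Ropt ^ 2 = 1 / Ropt)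
    (hr : Ropt < r) : 1 < r * log r ^ 2 := by
  have h := strictMonoOn_mul_log_sq (mem_Ici.2 hRopt.le) (mem_Ici.2 (hRopt.trans hr).le) hr
  dsimp only at h
  rwa [hroot, mul_one_div_cancel (by positivity)] at h

lemma radialSpeed_neg {Ropt r : ℝ} (hRopt : 1 < Ropt) (hroot : log Ropt ^ 2 = 1 / Ropt)
    (hr : Ropt < r) : radialSpeed r < 0 := by
  have hψ := one_lt_mul_log_sq hRopt hroot hr
  rw [← neg_pos, neg_radialSpeed_eq (hRopt.trans hr)]
  exact div_pos (by linarith) (mul_pos (by linarith) (by linarith))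

lemma neg_radialSpeed_le {Ropt r : ℝ} (hRopt : 1 < Ropt) (hroot : log Ropt ^ 2 = 1 / Ropt)
    (hr : Ropt < r) : -radialSpeed r ≤ r * log r ^ 2 - 1 := by
  have hψ := one_lt_mul_log_sq hRopt hroot hr
  rw [neg_radialSpeed_eq (hRopt.trans hr)]
  exact div_le_self (by linarith) (by nlinarith)

lemma neg_one_le_radialSpeed {r : ℝ} (hr : 1 ≤ r) : -1 ≤ radialSpeed r := by
  have : -1 ≤ -1 / r := by rw [le_div_iff₀ (by positivity)]; linarith
  have : 0 ≤ 1 / (r ^ 2 * log r ^ 2) := by positivity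
  rw [radialSpeed]
  linarith

lemma continuousOn_radialSpeed : ContinuousOn radialSpeed (Ioi 1) := by
  intro r (hr : 1 < r)
  have hr0 : r ≠ 0 := by positivity
  have := (log_pos hr).ne'
  unfold radialSpeed
  fun_prop (disch := positivity)

lemma radialSpeed_isBigO {Ropt : ℝ} (hRopt : 1 < Ropt) (hroot : log Ropt ^ 2 = 1 / Ropt) :
    radialSpeed =O[𝓝[>] Ropt] (· - Ropt) := by
  have hψ : (fun r => r * log r ^ 2 - Ropt * log Ropt ^ 2) =O[𝓝 Ropt] (· - Ropt) :=
    ((hasDerivAt_id Ropt).mul ((hasDerivAt_log (by positivity)).pow 2)).isBigO_sub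
  refine (IsBigO.of_bound' ?_).trans (hψ.mono nhdsWithin_le_nhds)
  filter_upwards [self_mem_nhdsWithin] with r (hr : Ropt < r)
  have hψ_gt := one_lt_mul_log_sq hRopt hroot hr
  rw [hroot, mul_one_div_cancel (by positivity), Real.norm_eq_abs, Real.norm_eq_abs,
    abs_of_neg (radialSpeed_neg hRopt hroot hr), abs_of_pos (by linarith)]
  exact neg_radialSpeed_le hRopt hroot hr

/-- For `R_opt` the unique root `> 1` of `(log R)^2 = 1/R`,
`f(R) = -1/R + 1/(R^2 (log R)^2)`, and an initial radius `R_0 > R_opt`, there is a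
global solution `R(t)` of the ODE `R' = f(R)`, `R(0) = R_0`, which is strictly
decreasing on `[0, ∞)`, stays in `(R_opt, R_0]`, and converges to `R_opt` as
`t → ∞`. -/
theorem radial_flow_from_above (Ropt : ℝ) (hRopt : 1 < Ropt)
    (hroot : (Real.log Ropt) ^ 2 = 1 / Ropt)
    (f : ℝ → ℝ) (hf : ∀ R : ℝ, f R = -1 / R + 1 / (R ^ 2 * (Real.log R) ^ 2))
    (R₀ : ℝ) (hR₀ : Ropt < R₀) :
    ∃ R : ℝ → ℝ, R 0 = R₀ ∧
      (∀ t : ℝ, 0 ≤ t → HasDerivAt R (f (R t)) t) ∧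
      StrictAntiOn R (Set.Ici (0 : ℝ)) ∧
      (∀ t : ℝ, 0 ≤ t → Ropt < R t ∧ R t ≤ R₀) ∧
      Filter.Tendsto R Filter.atTop (nhds Ropt) := by
  obtain rfl : f = radialSpeed := funext hf
  have hcont : ContinuousOn radialSpeed (Ioi Ropt) :=
    continuousOn_radialSpeed.mono (Ioi_subset_Ioi hRopt.le)
  have hneg : ∀ r ∈ Ioi Ropt, radialSpeed r < 0 := fun r hr => radialSpeed_neg hRopt hroot hr
  obtain ⟨R, hR0, hderiv, hanti, hgt, hlim⟩ := exists_solution_of_tendsto_flowTime hcont hneg hR₀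
    (tendsto_flowTime_nhdsGT_atTop hcont hneg hR₀ (radialSpeed_isBigO hRopt hroot))
    (tendsto_flowTime_atTop_atBot hcont hneg hR₀
      fun r hr => neg_one_le_radialSpeed (hRopt.trans (mem_Ioi.1 hr)).le)
  exact ⟨R, hR0, fun t _ => hderiv t, hanti.strictAntiOn _,
    fun t ht => ⟨hgt t, hR0 ▸ hanti.antitone ht⟩, hlim⟩
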